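/- Let d ≥ 1 be a natural number and let a, b be real numbers with d/2 < a ≤ b < d. Then there exists a constant C > 0 such that for every s ∈ [a, b] and all natural numbers t₁, t₃, one has (Γ(d−s+t₃)/Γ(s+t₃)) · (Γ(s+t₁)/Γ(d−s+t₁)) ≤ C·(1 + t₁^(2s−d))·(1 + t₃^(2s−d)). -/

import Mathlib

/-!
With `β = 2s - d ≥ 0`, the first quotient is `Γ(u) / Γ(u + β)` with `u = d - s + t₃ ≥ d - b`:
shifting both arguments by `2` with the functional equation lands in `[2, ∞)`, where `Γ` is
increasing, so it is at most `(1 + β / u)²`. The second quotient is `Γ(x + β) / Γ(x)` with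
`x = d - s + t₁`, and log-convexity of `Γ` between `x` and `x + d` bounds it by `(x + d) ^ β`,
which is `O(1 + t₁ ^ β)` uniformly in `s`.
-/

open Real

namespace Real

lemma Gamma_le_Gamma_of_two_le {x y : ℝ} (hx : 2 ≤ x) (hxy : x ≤ y) : Gamma x ≤ Gamma y :=
  Gamma_strictMonoOn_Ici.monotoneOn hx (hx.trans hxy) hxy

lemma Gamma_add_two {x : ℝ} (hx : 0 < x) : Gamma (x + 2) = x * (x + 1) * Gamma x := by
  rw [show x + 2 = x + 1 + 1 by ring, Gamma_add_one (by positivity), Gamma_add_one hx.ne']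
  ring

lemma Gamma_div_Gamma_add_le {u β : ℝ} (hu : 0 < u) (hβ : 0 ≤ β) :
    Gamma u / Gamma (u + β) ≤ (1 + β / u) ^ 2 := by
  have hΓ : 0 < Gamma (u + β) := Gamma_pos_of_pos (by positivity)
  have hmono : u * (u + 1) * Gamma u ≤ (u + β) * (u + β + 1) * Gamma (u + β) := by
    rw [← Gamma_add_two hu, ← Gamma_add_two (by positivity)]
    exact Gamma_le_Gamma_of_two_le (by linarith) (by linarith)
  have hshift : (u + β + 1) / (u + 1) ≤ (u + β) / u := by
    rw [div_le_div_iff₀ (by positivity) hu]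
    nlinarith
  rw [div_le_iff₀ hΓ]
  calc Gamma u = u * (u + 1) * Gamma u / (u * (u + 1)) := by field_simp
    _ ≤ (u + β) * (u + β + 1) * Gamma (u + β) / (u * (u + 1)) := by gcongr
    _ = (u + β) / u * ((u + β + 1) / (u + 1)) * Gamma (u + β) := by field_simp
    _ ≤ (u + β) / u * ((u + β) / u) * Gamma (u + β) := by gcongr
    _ = (1 + β / u) ^ 2 * Gamma (u + β) := by field_simp

lemma log_Gamma_add_nat_le {x : ℝ} (hx : 0 < x) (n : ℕ) :
    log (Gamma (x + n)) ≤ log (Gamma x) + n * log (x + n) := by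
  have hrec {y : ℝ} (hy : 0 < y) : (log ∘ Gamma) (y + 1) = (log ∘ Gamma) y + log y := by
    simp only [Function.comp, Gamma_add_one hy.ne', log_mul hy.ne' (Gamma_pos_of_pos hy).ne',
      add_comm]
  have hsum : ∑ m ∈ Finset.range n, log (x + m) ≤ n * log (x + n) := by
    have hterm : ∀ m ∈ Finset.range n, log (x + m) ≤ log (x + n) := fun m hm =>
      log_le_log (by positivity) (by gcongr; exact_mod_cast (Finset.mem_range.mp hm).le)
    simpa using Finset.sum_le_card_nsmul _ _ _ hterm
  have hfeq := BohrMollerup.f_add_nat_eq hrec hx n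
  simp only [Function.comp] at hfeq
  linarith

lemma Gamma_add_div_Gamma_le_rpow {x β : ℝ} {n : ℕ} (hx : 0 < x) (hβ : 0 ≤ β)
    (hβn : β ≤ n) :
    Gamma (x + β) / Gamma x ≤ (x + n) ^ β := by
  have hΓ : 0 < Gamma x := Gamma_pos_of_pos hx
  have hxn : 0 < x + n := by positivity
  have hθn : β / n * n = β := by
    rcases eq_or_ne (n : ℝ) 0 with hn | hn
    · rw [hn, mul_zero]; linarith
    · exact div_mul_cancel₀ β hn
  have hθ1 : β / n ≤ 1 := div_le_one_of_le₀ hβn (Nat.cast_nonneg n)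
  have hconv := convexOn_log_Gamma.2 (Set.mem_Ioi.2 hx) (Set.mem_Ioi.2 hxn)
    (sub_nonneg.2 hθ1) (div_nonneg hβ (Nat.cast_nonneg n)) (sub_add_cancel 1 (β / n))
  simp only [smul_eq_mul, Function.comp] at hconv
  rw [div_le_iff₀ hΓ, ← log_le_log_iff (Gamma_pos_of_pos (by positivity)) (by positivity),
    log_mul (by positivity) hΓ.ne', log_rpow hxn]
  calc log (Gamma (x + β)) = log (Gamma ((1 - β / n) * x + β / n * (x + n))) := by
        rw [show (1 - β / n) * x + β / n * (x + n) = x + β / n * n by ring, hθn]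
    _ ≤ (1 - β / n) * log (Gamma x) + β / n * log (Gamma (x + n)) := hconv
    _ ≤ (1 - β / n) * log (Gamma x) + β / n * (log (Gamma x) + n * log (x + n)) := by
        gcongr
        exact log_Gamma_add_nat_le hx n
    _ = β * log (x + n) + log (Gamma x) := by linear_combination log (x + n) * hθn

lemma add_rpow_le_add_one_rpow_mul {p t β : ℝ} (hp : 0 ≤ p) (ht : 0 ≤ t) (hβ : 0 ≤ β) :
    (p + t) ^ β ≤ (p + 1) ^ β * (1 + t ^ β) := by
  have htβ : 0 ≤ t ^ β := rpow_nonneg ht β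
  rcases le_total t 1 with ht1 | ht1
  · calc (p + t) ^ β ≤ (p + 1) ^ β := by gcongr
      _ ≤ (p + 1) ^ β * (1 + t ^ β) := le_mul_of_one_le_right (by positivity) (by linarith)
  · calc (p + t) ^ β ≤ ((p + 1) * t) ^ β := by gcongr; nlinarith
      _ = (p + 1) ^ β * t ^ β := mul_rpow (by positivity) ht
      _ ≤ (p + 1) ^ β * (1 + t ^ β) := by gcongr; linarith

lemma Gamma_add_add_div_Gamma_add_le {x t β : ℝ} {n : ℕ} (hx : 0 < x) (ht : 0 ≤ t)
    (hβ : 0 ≤ β) (hβn : β ≤ n) :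
    Gamma (x + t + β) / Gamma (x + t) ≤ (x + n + 1) ^ β * (1 + t ^ β) :=
  calc Gamma (x + t + β) / Gamma (x + t) ≤ (x + t + n) ^ β :=
        Gamma_add_div_Gamma_le_rpow (by positivity) hβ hβn
    _ = (x + n + t) ^ β := by ring_nf
    _ ≤ (x + n + 1) ^ β * (1 + t ^ β) := add_rpow_le_add_one_rpow_mul (by positivity) ht hβ

end Real

theorem gamma_quotient_pair_bound_general
    (d : ℕ) (a b : ℝ) (ha : (d : ℝ) / 2 < a)
    (hb : b < (d : ℝ)) :
    ∃ C : ℝ, 0 < C ∧ ∀ s ∈ Set.Icc a b, ∀ t₁ t₃ : ℕ,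
      (Gamma ((d : ℝ) - s + t₃) / Gamma (s + t₃)) *
        (Gamma (s + t₁) / Gamma ((d : ℝ) - s + t₁)) ≤
      C * ((1 + (t₁ : ℝ) ^ (2 * s - d)) * (1 + (t₃ : ℝ) ^ (2 * s - d))) := by
  refine ⟨(1 + d / (d - b)) ^ 2 * (2 * d + 1) ^ (d : ℝ), by positivity, ?_⟩
  rintro s ⟨has, hsb⟩ t₁ t₃
  have hs : 0 ≤ s := by linarith [d.cast_nonneg (α := ℝ)]
  have hds : 0 < (d : ℝ) - s := by linarith
  have hβ : 0 ≤ 2 * s - d := by linarith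
  have hβd : 2 * s - d ≤ d := by linarith
  have hfirst : Gamma (d - s + t₃) / Gamma (s + t₃) ≤ (1 + d / (d - b)) ^ 2 :=
    calc Gamma (d - s + t₃) / Gamma (s + t₃)
        = Gamma (d - s + t₃) / Gamma (d - s + t₃ + (2 * s - d)) := by ring_nf
      _ ≤ (1 + (2 * s - d) / (d - s + t₃)) ^ 2 := Gamma_div_Gamma_add_le (by positivity) hβ
      _ ≤ (1 + d / (d - b)) ^ 2 := by
        have := div_nonneg hβ (by positivity : (0 : ℝ) ≤ d - s + t₃)
        gcongr
        linarith
  have hsecond : Gamma (s + t₁) / Gamma (d - s + t₁) ≤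
      (2 * d + 1) ^ (d : ℝ) * (1 + (t₁ : ℝ) ^ (2 * s - d)) :=
    calc Gamma (s + t₁) / Gamma (d - s + t₁)
        = Gamma (d - s + t₁ + (2 * s - d)) / Gamma (d - s + t₁) := by ring_nf
      _ ≤ (d - s + d + 1) ^ (2 * s - d) * (1 + (t₁ : ℝ) ^ (2 * s - d)) :=
        Gamma_add_add_div_Gamma_add_le (by linarith) t₁.cast_nonneg hβ hβd
      _ ≤ (2 * d + 1) ^ (d : ℝ) * (1 + (t₁ : ℝ) ^ (2 * s - d)) := by
        gcongr
        exact (rpow_le_rpow (by linarith) (by linarith) hβ).trans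
          (rpow_le_rpow_of_exponent_le (by linarith) hβd)
  have ht₃ : 1 ≤ 1 + (t₃ : ℝ) ^ (2 * s - d) := by
    linarith [rpow_nonneg t₃.cast_nonneg (2 * s - d)]
  calc (Gamma (d - s + t₃) / Gamma (s + t₃)) * (Gamma (s + t₁) / Gamma (d - s + t₁))
      ≤ (1 + d / (d - b)) ^ 2 * ((2 * d + 1) ^ (d : ℝ) * (1 + (t₁ : ℝ) ^ (2 * s - d))) :=
        mul_le_mul hfirst hsecond (div_nonneg (Gamma_nonneg_of_nonneg (by linarith))
          (Gamma_nonneg_of_nonneg (by positivity))) (by positivity)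
    _ ≤ _ := by
        rw [mul_assoc]
        gcongr
        exact le_mul_of_one_le_right (by positivity) ht₃

theorem gamma_quotient_pair_bound
    (d : ℕ) (hd : 1 ≤ d) (a b : ℝ) (ha : (d : ℝ) / 2 < a) (hab : a ≤ b)
    (hb : b < (d : ℝ)) :
    ∃ C : ℝ, 0 < C ∧ ∀ s ∈ Set.Icc a b, ∀ t₁ t₃ : ℕ,
      (Gamma ((d : ℝ) - s + t₃) / Gamma (s + t₃)) *
        (Gamma (s + t₁) / Gamma ((d : ℝ) - s + t₁)) ≤
      C * ((1 + (t₁ : ℝ) ^ (2 * s - d)) * (1 + (t₃ : ℝ) ^ (2 * s - d))) :=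
  gamma_quotient_pair_bound_general d a b ha hb
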